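/- There exists a tuatara machine W that is universal for the class of all convergent machines: ζ_W ≤ 1, and for every Turing machine V with ζ_V < ∞ there is a constant c ≥ 0 such that for every x ∈ dom(V) there is a string p with |p| ≤ |x| + c and W(p) = V(x). -/

import Mathlib

open scoped ENNReal

/-- The domain of a Turing machine (a partial function on binary strings). -/
def dom (f : List Bool →. List Bool) : Set (List Bool) := {p | (f p).Dom}

/-- A machine is self-delimiting if its domain is prefix-free. -/
def SelfDelim (f : List Bool →. List Bool) : Prop :=
  ∀ p ∈ dom f, ∀ q ∈ dom f, p <+: q → p = q

/-- Chaitin's Omega number of a machine, in `[0,∞]`. -/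
noncomputable def Omega (f : List Bool →. List Bool) : ℝ≥0∞ :=
  ∑' p : dom f, (2 : ℝ≥0∞)⁻¹ ^ (p : List Bool).length

/-- `bin n` is the binary expansion of `n` with the leading 1 removed. -/
def bin (n : ℕ) : List Bool := (Nat.bits n).reverse.tail

/-- `Υ[A]`: the set of positive integers whose `bin`-code lies in `A`. -/
def Ups (A : Set (List Bool)) : Set ℕ := {n | 1 ≤ n ∧ bin n ∈ A}

/-- The zeta number of a machine, in `[0,∞]`. -/
noncomputable def zeta (f : List Bool →. List Bool) : ℝ≥0∞ :=
  ∑' n : Ups (dom f), ((n : ℕ) : ℝ≥0∞)⁻¹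

/-- `U` is a universal self-delimiting Turing machine. -/
def UnivSD (U : List Bool →. List Bool) : Prop :=
  SelfDelim U ∧ ∀ C : List Bool →. List Bool, Partrec C → SelfDelim C →
    ∃ c : ℕ, ∀ x ∈ dom C, ∃ p : List Bool, p.length ≤ x.length + c ∧ U p = C x

/-- `T` is a universal (plain) Turing machine. -/
def UnivTM (T : List Bool →. List Bool) : Prop :=
  ∀ C : List Bool →. List Bool, Partrec C →
    ∃ c : ℕ, ∀ x ∈ dom C, ∃ p : List Bool, p.length ≤ x.length + c ∧ T p = C x

/-- Program-size / plain complexity of a string w.r.t. a machine. -/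
noncomputable def Cpx (f : List Bool →. List Bool) (y : List Bool) : ℕ :=
  sInf {n : ℕ | ∃ w : List Bool, w.length = n ∧ y ∈ f w}

/-- Natural complexity of a string w.r.t. a machine, with `min ∅ = ∞`. -/
noncomputable def nabla (f : List Bool →. List Bool) (y : List Bool) : ℝ≥0∞ :=
  sInf {c : ℝ≥0∞ | ∃ n : ℕ, 1 ≤ n ∧ y ∈ f (bin n) ∧ c = (n : ℝ≥0∞)}

/-- The real number with binary digit sequence `x`. -/
noncomputable def realDigits (x : ℕ → Bool) : ℝ :=
  ∑' i : ℕ, (if x i then (1 : ℝ) else 0) * (2 : ℝ)⁻¹ ^ (i + 1)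

/-- The extended nonnegative real with binary digit sequence `x`. -/
noncomputable def ennDigits (x : ℕ → Bool) : ℝ≥0∞ :=
  ∑' i : ℕ, (if x i then (1 : ℝ≥0∞) else 0) * (2 : ℝ≥0∞)⁻¹ ^ (i + 1)

/-- The string of the first `m` digits of the sequence `x`. -/
def prefixStr (x : ℕ → Bool) (m : ℕ) : List Bool := (List.range m).map x

/-- A real is computable if it is approximated to within `2⁻ⁿ` by a computable
sequence of rationals. -/
def ComputableReal (s : ℝ) : Prop :=
  ∃ f : ℕ → ℚ, Computable f ∧ ∀ n : ℕ, |s - (f n : ℝ)| ≤ (2 : ℝ)⁻¹ ^ n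


/-! The machine reads a program `1ʲ 0 1²ᵏ⁺² 0 x` and runs the `j`-th partial recursive code `c`
on `x`, but accepts a run of `s` steps only if `∑ ⌊2ˢ / n⌋ ≤ 2ᵏ⁺ˢ`, the sum ranging over the `n`
such that `c` halts on `bin n` within `s` steps; this sum approximates `2ˢ ζ_c` from below.

If `c` computes `V` and `ζ_V ≤ 2ᵏ`, the guard never fails, so `V x` is output on a program of
length `|x| + j + 2k + 4`. Conversely, finitely many inputs that pass the guard all halt at the
largest of their stages, where the guard holds; there are at most `s` of them and each
contributes more than `2ˢ/n - 1` to the sum, so they have `ζ ≤ 2ᵏ + 1 ≤ 2ᵏ⁺¹`. The header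
divides `1/n` by at least `2^(j+2k+3)`, whence `ζ_W ≤ ∑_{j,k} 2^-(j+k+2) = 1`. -/

def unbin (x : List Bool) : ℕ := x.foldl (fun a b => 2 * a + b.toNat) 1

@[simp]
theorem unbin_nil : unbin [] = 1 := rfl

@[simp]
theorem unbin_append_singleton (x : List Bool) (b : Bool) :
    unbin (x ++ [b]) = 2 * unbin x + b.toNat := by
  simp [unbin]

theorem two_pow_length_le_unbin (x : List Bool) : 2 ^ x.length ≤ unbin x := by
  induction x using List.reverseRecOn with
  | nil => simp
  | append_singleton x b ih => simp [pow_succ]; omega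

theorem unbin_lt_two_pow (x : List Bool) : unbin x < 2 ^ (x.length + 1) := by
  induction x using List.reverseRecOn with
  | nil => simp
  | append_singleton x b ih => cases b <;> simp [pow_succ] <;> omega

theorem unbin_pos (x : List Bool) : 0 < unbin x :=
  (Nat.two_pow_pos _).trans_le (two_pow_length_le_unbin x)

theorem bin_bit (b : Bool) {n : ℕ} (hn : n ≠ 0) : bin (Nat.bit b n) = bin n ++ [b] := by
  have hbits : n.bits ≠ [] := by
    rw [← List.length_pos_iff, Nat.size_eq_bits_len, Nat.size_pos]; omega
  rw [bin, bin, Nat.bits_append_bit n b (absurd · hn), List.reverse_cons,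
    List.tail_append_of_ne_nil (by simpa using hbits)]

theorem bin_unbin (x : List Bool) : bin (unbin x) = x := by
  induction x using List.reverseRecOn with
  | nil => rfl
  | append_singleton x b ih =>
    have h := bin_bit b (unbin_pos x).ne'
    rw [Nat.bit_val, ih] at h
    rw [unbin_append_singleton, ← h]

theorem unbin_bin {n : ℕ} (hn : 1 ≤ n) : unbin (bin n) = n := by
  induction n using Nat.binaryRec' with
  | zero => omega
  | bit b m hm ih =>
    rcases Nat.eq_zero_or_pos m with rfl | hm0
    · obtain rfl : b = true := hm rfl
      rfl
    · rw [bin_bit b hm0.ne', unbin_append_singleton, ih hm0, Nat.bit_val]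

def upsEquiv (A : Set (List Bool)) : Ups A ≃ A where
  toFun n := ⟨bin n, n.2.2⟩
  invFun x := ⟨unbin x, unbin_pos x, by simp [bin_unbin]⟩
  left_inv n := Subtype.ext (unbin_bin n.2.1)
  right_inv x := Subtype.ext (bin_unbin x)

noncomputable def zetaSet (A : Set (List Bool)) : ℝ≥0∞ :=
  ∑' x : A, ((unbin x : ℕ) : ℝ≥0∞)⁻¹

theorem zeta_eq_zetaSet (f : List Bool →. List Bool) : zeta f = zetaSet (dom f) := by
  rw [zeta, zetaSet, ← (upsEquiv (dom f)).symm.tsum_eq]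
  rfl

theorem zetaSet_mono {A B : Set (List Bool)} (h : A ⊆ B) : zetaSet A ≤ zetaSet B :=
  ENNReal.tsum_mono_subtype (fun x => ((unbin x : ℕ) : ℝ≥0∞)⁻¹) h

theorem zetaSet_iUnion_le {ι : Type*} (A : ι → Set (List Bool)) :
    zetaSet (⋃ i, A i) ≤ ∑' i, zetaSet (A i) :=
  ENNReal.tsum_iUnion_le_tsum (fun x => ((unbin x : ℕ) : ℝ≥0∞)⁻¹) A

theorem sum_le_zetaSet {A : Set (List Bool)} {T : Finset (List Bool)} (h : ↑T ⊆ A) :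
    ∑ x ∈ T, ((unbin x : ℕ) : ℝ≥0∞)⁻¹ ≤ zetaSet A := by
  rw [zetaSet, tsum_subtype A (fun x => ((unbin x : ℕ) : ℝ≥0∞)⁻¹)]
  refine le_trans (le_of_eq ?_) (ENNReal.sum_le_tsum T)
  exact Finset.sum_congr rfl fun x hx =>
    (Set.indicator_of_mem (h hx) (fun x => ((unbin x : ℕ) : ℝ≥0∞)⁻¹)).symm

theorem zetaSet_le_of_forall_finset {A : Set (List Bool)} {B : ℝ≥0∞}
    (h : ∀ T : Finset (List Bool), ↑T ⊆ A → ∑ x ∈ T, ((unbin x : ℕ) : ℝ≥0∞)⁻¹ ≤ B) :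
    zetaSet A ≤ B := by
  classical
  rw [zetaSet, tsum_subtype A (fun x => ((unbin x : ℕ) : ℝ≥0∞)⁻¹), ENNReal.tsum_eq_iSup_sum]
  refine iSup_le fun T => ?_
  rw [Finset.sum_indicator_eq_sum_filter]
  exact h _ (by simp [Set.subset_def])

theorem natCast_div_le_div (N a : ℕ) : ((N / a : ℕ) : ℝ≥0∞) ≤ N / a := by
  rcases Nat.eq_zero_or_pos a with rfl | ha
  · simp
  rw [ENNReal.le_div_iff_mul_le (by simp [ha.ne']) (by simp)]
  exact_mod_cast Nat.div_mul_le_self N a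

theorem div_le_natCast_div_add_one (N : ℕ) {a : ℕ} (ha : a ≠ 0) :
    (N : ℝ≥0∞) / a ≤ ((N / a : ℕ) : ℝ≥0∞) + 1 := by
  rw [ENNReal.div_le_iff (by simpa using ha) (by simp), mul_comm]
  exact_mod_cast (Nat.lt_mul_div_succ N (Nat.pos_of_ne_zero ha)).le

theorem natCast_sum_div_le {α : Type*} (N : ℕ) (S : Finset α) (a : α → ℕ) :
    ((∑ x ∈ S, N / a x : ℕ) : ℝ≥0∞) ≤ N * ∑ x ∈ S, ((a x : ℕ) : ℝ≥0∞)⁻¹ := by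
  rw [Nat.cast_sum, Finset.mul_sum]
  exact Finset.sum_le_sum fun x _ => natCast_div_le_div N _

theorem mul_sum_inv_le {α : Type*} (N : ℕ) (S : Finset α) {a : α → ℕ} (ha : ∀ x ∈ S, a x ≠ 0) :
    N * ∑ x ∈ S, ((a x : ℕ) : ℝ≥0∞)⁻¹ ≤ ((∑ x ∈ S, N / a x : ℕ) : ℝ≥0∞) + S.card := by
  rw [Nat.cast_sum, Finset.mul_sum, Finset.card_eq_sum_ones, Nat.cast_sum,
    ← Finset.sum_add_distrib]
  exact Finset.sum_le_sum fun x hx => by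
    simpa [div_eq_mul_inv] using div_le_natCast_div_add_one N (ha x hx)

theorem replicate_true_append_false_inj {j j' : ℕ} {r r' : List Bool} :
    List.replicate j true ++ false :: r = List.replicate j' true ++ false :: r' ↔
      j = j' ∧ r = r' := by
  refine ⟨fun h => ?_, by rintro ⟨rfl, rfl⟩; rfl⟩
  induction j generalizing j' with
  | zero => cases j' <;> simp_all [List.replicate_succ]
  | succ j ih =>
    cases j' with
    | zero => simp [List.replicate_succ] at h
    | succ j' => simpa [List.replicate_succ] using ih (by simpa [List.replicate_succ] using h)

def program (j k : ℕ) (x : List Bool) : List Bool :=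
  List.replicate j true ++ false :: (List.replicate (2 * k + 2) true ++ false :: x)

theorem program_inj {j k j' k' : ℕ} {x x' : List Bool} :
    program j k x = program j' k' x' ↔ j = j' ∧ k = k' ∧ x = x' := by
  refine ⟨fun h => ?_, by rintro ⟨rfl, rfl, rfl⟩; rfl⟩
  obtain ⟨rfl, hrest⟩ := replicate_true_append_false_inj.1 h
  obtain ⟨hk, rfl⟩ := replicate_true_append_false_inj.1 hrest
  exact ⟨rfl, by omega, rfl⟩

theorem length_program (j k : ℕ) (x : List Bool) :
    (program j k x).length = x.length + (j + 2 * k + 4) := by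
  simp [program]; omega

theorem inv_unbin_program_le (j k : ℕ) (x : List Bool) :
    ((unbin (program j k x) : ℕ) : ℝ≥0∞)⁻¹ ≤ 2⁻¹ ^ (j + 2 * k + 3) * ((unbin x : ℕ) : ℝ≥0∞)⁻¹ := by
  have h : 2 ^ (j + 2 * k + 3) * unbin x ≤ unbin (program j k x) :=
    calc 2 ^ (j + 2 * k + 3) * unbin x ≤ 2 ^ (j + 2 * k + 3) * 2 ^ (x.length + 1) :=
          Nat.mul_le_mul_left _ (unbin_lt_two_pow x).le
      _ = 2 ^ (program j k x).length := by rw [length_program, ← pow_add]; congr 1; omega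
      _ ≤ unbin (program j k x) := two_pow_length_le_unbin _
  calc ((unbin (program j k x) : ℕ) : ℝ≥0∞)⁻¹ ≤ ((2 ^ (j + 2 * k + 3) * unbin x : ℕ) : ℝ≥0∞)⁻¹ :=
        ENNReal.inv_le_inv.2 (by exact_mod_cast h)
    _ = 2⁻¹ ^ (j + 2 * k + 3) * ((unbin x : ℕ) : ℝ≥0∞)⁻¹ := by
        rw [Nat.cast_mul, ENNReal.mul_inv (by simp) (by simp)]
        simp [ENNReal.inv_pow]

theorem zetaSet_image_program_le (j k : ℕ) (A : Set (List Bool)) :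
    zetaSet (program j k '' A) ≤ 2⁻¹ ^ (j + 2 * k + 3) * zetaSet A := by
  rw [zetaSet, tsum_image (fun x => ((unbin x : ℕ) : ℝ≥0∞)⁻¹)
    fun x _ y _ h => (program_inj.1 h).2.2, zetaSet, ← ENNReal.tsum_mul_left]
  exact ENNReal.tsum_le_tsum fun x => inv_unbin_program_le j k x

theorem tsum_inv_two_pow_add_add_two :
    ∑' jk : ℕ × ℕ, (2⁻¹ : ℝ≥0∞) ^ (jk.1 + jk.2 + 2) = 1 := by
  rw [ENNReal.tsum_prod (f := fun j k => (2⁻¹ : ℝ≥0∞) ^ (j + k + 2))]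
  simp only [pow_add, ENNReal.tsum_mul_right, ENNReal.tsum_mul_left,
    ENNReal.tsum_geometric, ENNReal.one_sub_inv_two, inv_inv]
  rw [← sq, ← mul_pow, ENNReal.mul_inv_cancel (by simp) (by simp), one_pow]

open Nat.Partrec (Code)
open Nat.Partrec.Code Encodable

theorem Nat.rfindOpt_eq_of_mem_iff {α : Type*} {f : ℕ → Option α} {P : Part α}
    (h : ∀ a, a ∈ P ↔ ∃ n, a ∈ f n) : Nat.rfindOpt f = P := by
  ext a
  refine ⟨fun ha => (h a).2 (Nat.rfindOpt_spec ha), fun ha => ?_⟩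
  obtain ⟨n, hn⟩ := (h a).1 ha
  obtain ⟨b, hb⟩ := Part.dom_iff_mem.1 (Nat.rfindOpt_dom.2 ⟨n, a, hn⟩)
  rwa [Part.mem_unique ha ((h b).2 (Nat.rfindOpt_spec hb))]

theorem rfindOpt_evaln (c : Code) (n : ℕ) : Nat.rfindOpt (fun s => evaln s c n) = eval c n :=
  Nat.rfindOpt_eq_of_mem_iff fun _ => evaln_complete

theorem exists_code_of_partrec {V : List Bool →. List Bool} (hV : Partrec V) :
    ∃ c : Code, ∀ x, eval c (encode x) = (V x).map encode := by
  obtain ⟨c, hc⟩ := exists_code.1 hV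
  exact ⟨c, fun x => by simp [hc, encodek]⟩

noncomputable def haltSet (c : Code) (s : ℕ) : Finset (List Bool) :=
  ((Finset.range s).preimage encode encode_injective.injOn).filter
    fun x => (evaln s c (encode x)).isSome

theorem mem_haltSet_iff {c : Code} {s : ℕ} {x : List Bool} :
    x ∈ haltSet c s ↔ encode x < s ∧ (evaln s c (encode x)).isSome := by
  simp [haltSet]

theorem mem_haltSet {c : Code} {s : ℕ} {x : List Bool} :
    x ∈ haltSet c s ↔ (evaln s c (encode x)).isSome := by
  rw [mem_haltSet_iff, and_iff_right_iff_imp, Option.isSome_iff_exists]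
  exact fun ⟨_, h⟩ => evaln_bound h

theorem card_haltSet_le (c : Code) (s : ℕ) : (haltSet c s).card ≤ s :=
  (Finset.card_le_card_of_injOn encode (fun x hx => by simpa using (mem_haltSet_iff.1 hx).1)
    encode_injective.injOn).trans_eq (Finset.card_range s)

theorem haltSet_mono (c : Code) {s s' : ℕ} (h : s ≤ s') : haltSet c s ⊆ haltSet c s' := by
  intro x hx
  obtain ⟨a, ha⟩ := Option.isSome_iff_exists.1 (mem_haltSet.1 hx)
  exact mem_haltSet.2 (Option.isSome_iff_exists.2 ⟨a, evaln_mono h ha⟩)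

theorem haltSet_subset_dom {V : List Bool →. List Bool} {c : Code}
    (hc : ∀ x, eval c (encode x) = (V x).map encode) (s : ℕ) : ↑(haltSet c s) ⊆ dom V := by
  intro x hx
  obtain ⟨a, ha⟩ := Option.isSome_iff_exists.1 (mem_haltSet.1 hx)
  have := evaln_sound ha
  rw [hc] at this
  obtain ⟨y, hy, -⟩ := (Part.mem_map_iff _).1 this
  exact Part.dom_iff_mem.2 ⟨y, hy⟩

/-- This is `∑ x ∈ haltSet c s, ⌊2ˢ / unbin x⌋` (`zetaStage_eq_sum_haltSet`), written as a sum
over the codes `n < s` so that it is visibly primitive recursive. -/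
def zetaStage (c : Code) (s : ℕ) : ℕ :=
  ∑ n ∈ Finset.range s,
    if (evaln s c n).isSome then ((decode₂ (List Bool) n).map (2 ^ s / unbin ·)).getD 0 else 0

theorem zetaStage_eq_sum_haltSet (c : Code) (s : ℕ) :
    zetaStage c s = ∑ x ∈ haltSet c s, 2 ^ s / unbin x := by
  have hzero : ∀ n ∈ Finset.range s, n ∉ Set.range (encode : List Bool → ℕ) →
      decode₂ (List Bool) n = none := fun n _ hn =>
    Option.eq_none_iff_forall_ne_some.2 fun x hx => hn ⟨x, mem_decode₂.1 hx⟩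
  rw [zetaStage, haltSet, Finset.sum_filter,
    ← Finset.sum_preimage (encode : List Bool → ℕ) _ encode_injective.injOn _
      fun n hn hr => by simp [hzero n hn hr]]
  simp

theorem zetaStage_le_of_zetaSet_le {c : Code} {A : Set (List Bool)} {k : ℕ}
    (hA : ∀ s, ↑(haltSet c s) ⊆ A) (hζ : zetaSet A ≤ 2 ^ k) (s : ℕ) :
    zetaStage c s ≤ 2 ^ (k + s) := by
  have : (zetaStage c s : ℝ≥0∞) ≤ 2 ^ s * 2 ^ k :=
    calc (zetaStage c s : ℝ≥0∞) ≤ (2 ^ s : ℕ) * zetaSet A := by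
          rw [zetaStage_eq_sum_haltSet]
          exact (natCast_sum_div_le _ _ _).trans (by gcongr; exact sum_le_zetaSet (hA s))
      _ ≤ 2 ^ s * 2 ^ k := by push_cast; gcongr
  rw [pow_add, mul_comm]
  exact_mod_cast this

def guardedEvaln (k : ℕ) (c : Code) (s n : ℕ) : Option ℕ :=
  if zetaStage c s ≤ 2 ^ (k + s) then evaln s c n else none

theorem isSome_guardedEvaln {k s n : ℕ} {c : Code} :
    (guardedEvaln k c s n).isSome ↔ zetaStage c s ≤ 2 ^ (k + s) ∧ (evaln s c n).isSome := by
  unfold guardedEvaln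
  split_ifs with h <;> simp [h]

def admitted (k : ℕ) (c : Code) : Set (List Bool) :=
  {x | ∃ s, (guardedEvaln k c s (encode x)).isSome}

theorem exists_stage_of_subset_admitted {k : ℕ} {c : Code} {T : Finset (List Bool)}
    (hT : ↑T ⊆ admitted k c) (hne : T.Nonempty) :
    ∃ s, zetaStage c s ≤ 2 ^ (k + s) ∧ T ⊆ haltSet c s := by
  have hT' : ∀ x ∈ T, ∃ s, (guardedEvaln k c s (encode x)).isSome := fun x hx => hT hx
  choose! stage hstage using hT'
  obtain ⟨x₀, hx₀, hmax⟩ := T.exists_max_image stage hne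
  refine ⟨stage x₀, (isSome_guardedEvaln.1 (hstage x₀ hx₀)).1, fun x hx => ?_⟩
  exact haltSet_mono c (hmax x hx) (mem_haltSet.2 (isSome_guardedEvaln.1 (hstage x hx)).2)

theorem zetaSet_admitted_le (k : ℕ) (c : Code) : zetaSet (admitted k c) ≤ 2 ^ (k + 1) := by
  refine zetaSet_le_of_forall_finset fun T hT => ?_
  rcases T.eq_empty_or_nonempty with rfl | hne
  · simp
  obtain ⟨s, hguard, hTs⟩ := exists_stage_of_subset_admitted hT hne
  rw [zetaStage_eq_sum_haltSet] at hguard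
  have hnat : (∑ x ∈ haltSet c s, 2 ^ s / unbin x) + (haltSet c s).card ≤ 2 ^ s * 2 ^ (k + 1) := by
    have := card_haltSet_le c s
    have := Nat.lt_two_pow_self (n := s)
    have := Nat.one_le_two_pow (n := k)
    rw [pow_add] at hguard ⊢
    nlinarith
  refine (ENNReal.mul_le_mul_iff_right (a := ((2 ^ s : ℕ) : ℝ≥0∞)) (by simp) (by simp)).1 ?_
  calc ((2 ^ s : ℕ) : ℝ≥0∞) * ∑ x ∈ T, ((unbin x : ℕ) : ℝ≥0∞)⁻¹
      ≤ (2 ^ s : ℕ) * ∑ x ∈ haltSet c s, ((unbin x : ℕ) : ℝ≥0∞)⁻¹ := by gcongr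
    _ ≤ ((∑ x ∈ haltSet c s, 2 ^ s / unbin x : ℕ) : ℝ≥0∞) + (haltSet c s).card :=
        mul_sum_inv_le _ _ fun x _ => (unbin_pos x).ne'
    _ ≤ ((2 ^ s : ℕ) : ℝ≥0∞) * 2 ^ (k + 1) := by exact_mod_cast hnat

def parseProgram (p : List Bool) : Part (ℕ × ℕ × List Bool) :=
  Nat.rfindOpt fun n =>
    (decode₂ (ℕ × ℕ × List Bool) n).bind fun t =>
      if program t.1 t.2.1 t.2.2 = p then some t else none

theorem parseProgram_program (j k : ℕ) (x : List Bool) :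
    parseProgram (program j k x) = Part.some (j, k, x) := by
  refine Nat.rfindOpt_eq_of_mem_iff fun t => ?_
  simp only [Part.mem_some_iff, Option.mem_def, Option.bind_eq_some_iff,
    Option.ite_none_right_eq_some, Option.some.injEq]
  constructor
  · rintro rfl
    exact ⟨encode (j, k, x), _, encodek₂ _, rfl, rfl⟩
  · rintro ⟨_, t', -, h, rfl⟩
    obtain ⟨rfl, rfl, rfl⟩ := program_inj.1 h
    rfl

theorem program_of_mem_parseProgram {p : List Bool} {t : ℕ × ℕ × List Bool}
    (h : t ∈ parseProgram p) : program t.1 t.2.1 t.2.2 = p := by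
  obtain ⟨n, hn⟩ := Nat.rfindOpt_spec h
  simp only [Option.mem_def, Option.bind_eq_some_iff, Option.ite_none_right_eq_some] at hn
  obtain ⟨_, _, h, h'⟩ := hn
  rwa [← Option.some_inj.1 h']

def runProgram (j k : ℕ) (x : List Bool) : Part ℕ :=
  Nat.rfindOpt fun s => guardedEvaln k (Denumerable.ofNat Code j) s (encode x)

theorem runProgram_encode {c : Code} {k : ℕ} (hc : ∀ s, zetaStage c s ≤ 2 ^ (k + s))
    (x : List Bool) : runProgram (encode c) k x = eval c (encode x) := by
  simp only [runProgram, guardedEvaln, Denumerable.ofNat_encode, hc, if_true]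
  exact rfindOpt_evaln c _

def universalTuatara (p : List Bool) : Part (List Bool) :=
  (parseProgram p).bind fun t =>
    (runProgram t.1 t.2.1 t.2.2).bind fun a => Part.ofOption (decode a)

theorem universalTuatara_program {V : List Bool →. List Bool} {c : Code}
    (hc : ∀ x, eval c (encode x) = (V x).map encode) {k : ℕ} (hζ : zeta V ≤ 2 ^ k)
    (x : List Bool) : universalTuatara (program (encode c) k x) = V x := by
  have hstage := zetaStage_le_of_zetaSet_le (haltSet_subset_dom hc) (zeta_eq_zetaSet V ▸ hζ)
  rw [universalTuatara, parseProgram_program, Part.bind_some, runProgram_encode hstage, hc]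
  simp [encodek]

theorem dom_universalTuatara_subset :
    dom universalTuatara ⊆
      ⋃ jk : ℕ × ℕ, program jk.1 jk.2 '' admitted jk.2 (Denumerable.ofNat Code jk.1) := by
  rintro p ⟨hparse, hrun, -⟩
  set t := (parseProgram p).get hparse
  obtain ⟨s, a, ha⟩ := Nat.rfindOpt_dom.1 hrun
  exact Set.mem_iUnion.2 ⟨(t.1, t.2.1), t.2.2, ⟨s, Option.isSome_iff_exists.2 ⟨a, ha⟩⟩,
    program_of_mem_parseProgram (Part.get_mem hparse)⟩

theorem zeta_universalTuatara_le : zeta universalTuatara ≤ 1 :=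
  calc zeta universalTuatara
      ≤ ∑' jk : ℕ × ℕ, zetaSet (program jk.1 jk.2 '' admitted jk.2 (Denumerable.ofNat Code jk.1)) :=
        (zeta_eq_zetaSet _).trans_le <|
          (zetaSet_mono dom_universalTuatara_subset).trans (zetaSet_iUnion_le _)
    _ ≤ ∑' jk : ℕ × ℕ, (2⁻¹ : ℝ≥0∞) ^ (jk.1 + jk.2 + 2) := by
        refine ENNReal.tsum_le_tsum fun ⟨j, k⟩ => (zetaSet_image_program_le j k _).trans ?_
        calc 2⁻¹ ^ (j + 2 * k + 3) * zetaSet (admitted k (Denumerable.ofNat Code j))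
            ≤ 2⁻¹ ^ (j + 2 * k + 3) * 2 ^ (k + 1) := by gcongr; exact zetaSet_admitted_le k _
          _ = 2⁻¹ ^ (j + k + 2) := by
            rw [show j + 2 * k + 3 = (j + k + 2) + (k + 1) by ring, pow_add, mul_assoc,
              ← ENNReal.inv_pow (n := k + 1), ENNReal.inv_mul_cancel (by simp) (by simp), mul_one]
    _ = 1 := tsum_inv_two_pow_add_add_two

namespace Primrec

theorem nat_pow : Primrec₂ ((· ^ ·) : ℕ → ℕ → ℕ) :=
  Primrec₂.unpaired'.1 Nat.Primrec.pow

theorem list_sum_nat : Primrec (List.sum : List ℕ → ℕ) :=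
  (list_foldr .id (const 0) (nat_add.comp (fst.comp snd) (snd.comp snd)).to₂).of_eq
    fun l => (List.sum_eq_foldr (l := l)).symm

theorem list_replicate {b : Bool} : Primrec fun n : ℕ => List.replicate n b :=
  (list_map list_range (const b).to₂).of_eq fun n => by simp [List.map_const']

theorem unbin : Primrec _root_.unbin :=
  list_foldl .id (const 1) (nat_add.comp (nat_mul.comp (const 2) (fst.comp snd))
    (Primrec.cond (snd.comp snd) (const 1) (const 0))).to₂

theorem zetaStage : Primrec₂ _root_.zetaStage := by
  have hhalt : PrimrecPred fun q : (Code × ℕ) × ℕ => (evaln q.1.2 q.1.1 q.2).isSome = true :=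
    Primrec.eq.comp (option_isSome.comp
      (primrec_evaln.comp ((snd.comp fst).pair (fst.comp fst) |>.pair snd))) (const true)
  have hweight : Primrec fun q : (Code × ℕ) × ℕ =>
      ((decode₂ (List Bool) q.2).map (2 ^ q.1.2 / _root_.unbin ·)).getD 0 :=
    option_getD.comp (option_map (Primrec.decode₂.comp snd)
      (nat_div.comp (nat_pow.comp (const 2) (snd.comp (fst.comp fst))) (unbin.comp snd)).to₂)
      (const 0)
  exact (list_sum_nat.comp (list_map (list_range.comp snd) (ite hhalt hweight (const 0)).to₂)).to₂

theorem program : Primrec fun t : ℕ × ℕ × List Bool => _root_.program t.1 t.2.1 t.2.2 :=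
  list_append.comp (list_replicate.comp fst)
    (list_cons.comp (const false)
      (list_append.comp
        (list_replicate.comp (nat_add.comp (nat_mul.comp (const 2) (fst.comp snd)) (const 2)))
        (list_cons.comp (const false) (snd.comp snd))))

end Primrec

theorem partrec_parseProgram : Partrec parseProgram :=
  Partrec.rfindOpt <| Primrec₂.to_comp <|
    (Primrec.option_bind (Primrec.decode₂.comp Primrec.snd)
      (Primrec.ite (Primrec.eq.comp (Primrec.program.comp Primrec.snd)
        (Primrec.fst.comp Primrec.fst)) (Primrec.option_some.comp Primrec.snd)
        (Primrec.const none)).to₂).to₂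

theorem partrec_runProgram : Partrec fun t : ℕ × ℕ × List Bool => runProgram t.1 t.2.1 t.2.2 := by
  have hcode : Primrec fun q : (ℕ × ℕ × List Bool) × ℕ => Denumerable.ofNat Code q.1.1 :=
    (Primrec.ofNat Code).comp (Primrec.fst.comp Primrec.fst)
  have hguard : PrimrecPred fun q : (ℕ × ℕ × List Bool) × ℕ =>
      zetaStage (Denumerable.ofNat Code q.1.1) q.2 ≤ 2 ^ (q.1.2.1 + q.2) :=
    Primrec.nat_le.comp (Primrec.zetaStage.comp hcode Primrec.snd)
      (Primrec.nat_pow.comp (Primrec.const 2)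
        (Primrec.nat_add.comp (Primrec.fst.comp (Primrec.snd.comp Primrec.fst)) Primrec.snd))
  have hevaln : Primrec fun q : (ℕ × ℕ × List Bool) × ℕ =>
      evaln q.2 (Denumerable.ofNat Code q.1.1) (encode q.1.2.2) :=
    primrec_evaln.comp ((Primrec.snd.pair hcode).pair
      (Primrec.encode.comp (Primrec.snd.comp (Primrec.snd.comp Primrec.fst))))
  exact Partrec.rfindOpt (Primrec.ite hguard hevaln (Primrec.const none)).to_comp.to₂

theorem partrec_universalTuatara : Partrec universalTuatara :=
  partrec_parseProgram.bind ((partrec_runProgram.comp Computable.snd).bind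
    (Computable.ofOption (Computable.decode.comp Computable.snd)).to₂).to₂

/-- There exists a tuatara machine universal for the class of all convergent
machines. -/
theorem stmt_10 :
    ∃ W : List Bool →. List Bool, Partrec W ∧ zeta W ≤ 1 ∧
      ∀ V : List Bool →. List Bool, Partrec V → zeta V < ⊤ →
        ∃ c : ℕ, ∀ x ∈ dom V, ∃ p : List Bool, p.length ≤ x.length + c ∧ W p = V x := by
  refine ⟨universalTuatara, partrec_universalTuatara, zeta_universalTuatara_le,
    fun V hV hζ => ?_⟩
  obtain ⟨c, hc⟩ := exists_code_of_partrec hV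
  obtain ⟨k, hk⟩ : ∃ k : ℕ, zeta V ≤ 2 ^ k := by
    obtain ⟨n, hn⟩ := ENNReal.exists_nat_gt hζ.ne
    exact ⟨n, hn.le.trans (by exact_mod_cast (Nat.lt_two_pow_self (n := n)).le)⟩
  exact ⟨encode c + 2 * k + 4, fun x _ =>
    ⟨program (encode c) k x, (length_program _ _ x).le, universalTuatara_program hc hk x⟩⟩
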